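/- Proof quintuples with an empty hypothesis are sound and complete for relative trace equality: (s₁, s₂, h₁, h₂) ∈ G_F(∅) if and only if ⟦s₁⟧_C = ⟦s₂⟧_C implies ⟦h₁⟧_H = ⟦h₂⟧_H, where F = rbisimF. -/
import Mathlib


/-- A deterministic transition system with leakage. -/
structure TS (S : Type*) (A : Type*) where
  next : S → S
  leak : S → A

namespace TS

/-- The infinite leakage trace of a state. -/
def trace {S A : Type*} (T : TS S A) (s : S) : ℕ → A :=
  fun n => T.leak (T.next^[n] s)

/-- The functional whose greatest fixpoint is bisimilarity. -/
def bisimF {S A : Type*} (T : TS S A) : Set (S × S) →o Set (S × S) where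
  toFun R := {p | T.leak p.1 = T.leak p.2 ∧ (T.next p.1, T.next p.2) ∈ R}
  monotone' := fun _ _ h _ hp => ⟨hp.1, h hp.2⟩

/-- Bisimilarity. -/
def bisim {S A : Type*} (T : TS S A) : Set (S × S) := OrderHom.gfp (bisimF T)

end TS

/-- Quadruples of two contract states and two hardware states. -/
abbrev Quad (Sc Sh : Type*) := Sc × Sc × Sh × Sh

section Rel

variable {Sc A Sh B : Type*}

/-- Inner (inductive) functional of relative bisimilarity, parameterized by `R1`. -/
def rinner (C : TS Sc A) (H : TS Sh B) (R1 : Set (Quad Sc Sh)) :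
    Set (Quad Sc Sh) →o Set (Quad Sc Sh) where
  toFun R2 := {q | C.leak q.1 ≠ C.leak q.2.1 ∨
      (C.next q.1, C.next q.2.1, q.2.2.1, q.2.2.2) ∈ R2 ∨
      (H.leak q.2.2.1 = H.leak q.2.2.2 ∧
        (q.1, q.2.1, H.next q.2.2.1, H.next q.2.2.2) ∈ R1)}
  monotone' := fun _ _ h _ hq => by
    rcases hq with h1 | h2 | h3
    · exact Or.inl h1
    · exact Or.inr (Or.inl (h h2))
    · exact Or.inr (Or.inr h3)

/-- The mixed functional for relative bisimilarity: contract steps inductive,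
hardware steps coinductive. -/
def rbisimF (C : TS Sc A) (H : TS Sh B) : Set (Quad Sc Sh) →o Set (Quad Sc Sh) where
  toFun R1 := OrderHom.lfp (rinner C H R1)
  monotone' := fun R R' h => OrderHom.lfp.monotone (fun _ _ hq => by
    rcases hq with h1 | h2 | h3
    · exact Or.inl h1
    · exact Or.inr (Or.inl h2)
    · exact Or.inr (Or.inr ⟨h3.1, h h3.2⟩))

/-- Relative bisimilarity. -/
def rbisim (C : TS Sc A) (H : TS Sh B) : Set (Quad Sc Sh) :=
  OrderHom.gfp (rbisimF C H)

/-- The lockstep functional for relative bisimilarity. -/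
def rbisimLockF (C : TS Sc A) (H : TS Sh B) : Set (Quad Sc Sh) →o Set (Quad Sc Sh) where
  toFun R := {q | C.leak q.1 ≠ C.leak q.2.1 ∨
      (H.leak q.2.2.1 = H.leak q.2.2.2 ∧
        (C.next q.1, C.next q.2.1, H.next q.2.2.1, H.next q.2.2.2) ∈ R)}
  monotone' := fun _ _ h _ hq => by
    rcases hq with h1 | h2
    · exact Or.inl h1
    · exact Or.inr ⟨h2.1, h h2.2⟩

/-- Lockstep relative bisimilarity. -/
def rbisimLock (C : TS Sc A) (H : TS Sh B) : Set (Quad Sc Sh) :=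
  OrderHom.gfp (rbisimLockF C H)

/-- The naive relaxed (purely coinductive) functional. -/
def rbisimRelaxedF (C : TS Sc A) (H : TS Sh B) : Set (Quad Sc Sh) →o Set (Quad Sc Sh) where
  toFun R := {q | C.leak q.1 ≠ C.leak q.2.1 ∨
      (C.next q.1, C.next q.2.1, q.2.2.1, q.2.2.2) ∈ R ∨
      (H.leak q.2.2.1 = H.leak q.2.2.2 ∧
        (q.1, q.2.1, H.next q.2.2.1, H.next q.2.2.2) ∈ R)}
  monotone' := fun _ _ h _ hq => by
    rcases hq with h1 | h2 | h3
    · exact Or.inl h1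
    · exact Or.inr (Or.inl (h h2))
    · exact Or.inr (Or.inr ⟨h3.1, h h3.2⟩)

/-- Relaxed relative bisimilarity (unsound). -/
def rbisimRelaxed (C : TS Sc A) (H : TS Sh B) : Set (Quad Sc Sh) :=
  OrderHom.gfp (rbisimRelaxedF C H)

end Rel

/-- Parameterized greatest fixpoint (Paco): `GF F I = νX. F (X ∪ I)`. -/
def GF {U : Type*} (F : Set U →o Set U) (I : Set U) : Set U :=
  OrderHom.gfp ⟨fun X => F (X ∪ I),
    fun _ _ h => F.monotone (Set.union_subset_union h (subset_refl I))⟩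


section MyProof

variable {Sc A Sh B : Type*}

lemma GF_empty {U : Type*} (F : Set U →o Set U) : GF F ∅ = OrderHom.gfp F := by
  unfold GF
  congr 1
  ext X x
  simp

lemma trace_next {S A : Type*} (T : TS S A) (s : S) (n : ℕ) :
    T.trace (T.next s) n = T.trace s (n + 1) := by
  simp [TS.trace, Function.iterate_succ_apply]

lemma trace_next_eq {S A : Type*} (T : TS S A) {s1 s2 : S}
    (h : T.trace s1 = T.trace s2) : T.trace (T.next s1) = T.trace (T.next s2) := by
  funext n; rw [trace_next, trace_next, h]

lemma rbisim_eq (C : TS Sc A) (H : TS Sh B) :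
    rbisim C H = OrderHom.lfp (rinner C H (rbisim C H)) := by
  conv_lhs => rw [rbisim, ← OrderHom.map_gfp (rbisimF C H)]
  rfl

lemma mem_lfp_of_leak_ne (C : TS Sc A) (H : TS Sh B) (R : Set (Quad Sc Sh)) :
    ∀ (n : ℕ) (s1 s2 : Sc) (t1 t2 : Sh),
      C.leak (C.next^[n] s1) ≠ C.leak (C.next^[n] s2) →
      (s1, s2, t1, t2) ∈ OrderHom.lfp (rinner C H R) := by
  intro n
  induction n with
  | zero =>
    intro s1 s2 t1 t2 h
    rw [← OrderHom.map_lfp]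
    exact Or.inl (by simpa using h)
  | succ n ih =>
    intro s1 s2 t1 t2 h
    rw [← OrderHom.map_lfp]
    exact Or.inr (Or.inl (ih _ _ _ _ (by
      simpa [Function.iterate_succ_apply] using h)))

lemma rbisim_complete (C : TS Sc A) (H : TS Sh B) :
    {q : Quad Sc Sh | C.trace q.1 = C.trace q.2.1 →
        H.trace q.2.2.1 = H.trace q.2.2.2} ⊆ rbisim C H := by
  apply OrderHom.le_gfp
  rintro ⟨s1, s2, t1, t2⟩ hq
  show _ ∈ OrderHom.lfp (rinner C H _)
  by_cases hc : C.trace s1 = C.trace s2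
  · rw [← OrderHom.map_lfp]
    refine Or.inr (Or.inr ⟨?_, ?_⟩)
    · have := congrFun (hq hc) 0
      simpa [TS.trace] using this
    · intro _
      exact trace_next_eq H (hq hc)
  · obtain ⟨n, hn⟩ : ∃ n, C.trace s1 n ≠ C.trace s2 n := by
      by_contra h
      push_neg at h
      exact hc (funext h)
    exact mem_lfp_of_leak_ne C H _ n s1 s2 t1 t2 hn

lemma rbisim_sound_step (C : TS Sc A) (H : TS Sh B) :
    ∀ q ∈ rbisim C H, C.trace q.1 = C.trace q.2.1 →
      H.leak q.2.2.1 = H.leak q.2.2.2 ∧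
        (q.1, q.2.1, H.next q.2.2.1, H.next q.2.2.2) ∈ rbisim C H := by
  have key : OrderHom.lfp (rinner C H (rbisim C H)) ⊆
      {q : Quad Sc Sh | C.trace q.1 = C.trace q.2.1 →
        H.leak q.2.2.1 = H.leak q.2.2.2 ∧
          (q.1, q.2.1, H.next q.2.2.1, H.next q.2.2.2) ∈ rbisim C H} := by
    apply OrderHom.lfp_le
    rintro ⟨s1, s2, t1, t2⟩ hq hc
    rcases hq with h1 | h2 | h3
    · exact absurd (congrFun hc 0) (by simpa [TS.trace] using h1)
    · have h2' := h2 (trace_next_eq C hc)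
      refine ⟨h2'.1, ?_⟩
      rw [rbisim_eq, ← OrderHom.map_lfp]
      exact Or.inr (Or.inl (by rw [← rbisim_eq]; exact h2'.2))
    · exact h3
  intro q hq
  exact key (by rw [← rbisim_eq]; exact hq)

lemma rbisim_sound (C : TS Sc A) (H : TS Sh B) :
    ∀ (n : ℕ) (s1 s2 : Sc) (t1 t2 : Sh), (s1, s2, t1, t2) ∈ rbisim C H →
      C.trace s1 = C.trace s2 → H.trace t1 n = H.trace t2 n := by
  intro n
  induction n with
  | zero =>
    intro s1 s2 t1 t2 hq hc
    have := (rbisim_sound_step C H _ hq hc).1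
    simpa [TS.trace] using this
  | succ n ih =>
    intro s1 s2 t1 t2 hq hc
    have h := (rbisim_sound_step C H _ hq hc).2
    have := ih s1 s2 _ _ h hc
    rwa [trace_next, trace_next] at this

end MyProof

theorem quintuple_empty_iff_relative_trace_eq {Sc A Sh B : Type*}
    (C : TS Sc A) (H : TS Sh B) (s1 s2 : Sc) (h1 h2 : Sh) :
    (s1, s2, h1, h2) ∈ GF (rbisimF C H) ∅ ↔
      (C.trace s1 = C.trace s2 → H.trace h1 = H.trace h2) := by
  rw [GF_empty]
  constructor
  · intro hm hc
    funext n
    exact rbisim_sound C H n s1 s2 h1 h2 hm hc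
  · intro h
    exact rbisim_complete C H h
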